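/- arXiv:2605.25896 — 15 statements merged into one kernel-verified Lean document; each statement's English description precedes it below -/
import Mathlib

section
/- For each i with 1 ≤ i ≤ n, the pair of 2×2 matrices A = [[z^(n+1-i), -y],[x, z^i]] and B = [[z^i, y],[-x, z^(n+1-i)]] over the polynomial ring k[x,y,z] satisfies A·B = (z^(n+1) + x·y)·I₂ and B·A = (z^(n+1) + x·y)·I₂, i.e., (A,B) is a matrix factorization of the A_n singularity equation f = z^(n+1) + xy. -/
open MvPolynomial Matrix

/-- For each `1 ≤ i ≤ n`, the pair `(A, B)` below is a matrix factorization of the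
`A_n` singularity equation `f = z^(n+1) + x*y` over `k[x,y,z]`. -/
theorem stmt_0 (k : Type*) [Field k] (n i : ℕ) (hn : 1 ≤ n) (hi1 : 1 ≤ i) (hin : i ≤ n) :
    let x : MvPolynomial (Fin 3) k := X 0
    let y : MvPolynomial (Fin 3) k := X 1
    let z : MvPolynomial (Fin 3) k := X 2
    let f : MvPolynomial (Fin 3) k := z ^ (n + 1) + x * y
    let A : Matrix (Fin 2) (Fin 2) (MvPolynomial (Fin 3) k) :=
      !![z ^ (n + 1 - i), -y; x, z ^ i]
    let B : Matrix (Fin 2) (Fin 2) (MvPolynomial (Fin 3) k) :=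
      !![z ^ i, y; -x, z ^ (n + 1 - i)]
    A * B = f • (1 : Matrix (Fin 2) (Fin 2) (MvPolynomial (Fin 3) k)) ∧
      B * A = f • (1 : Matrix (Fin 2) (Fin 2) (MvPolynomial (Fin 3) k)) := by
  intro x y z f A B
  have hz : z ^ (n + 1 - i) * z ^ i = z * z ^ n := by
    rw [← pow_add, ← pow_succ']; congr 1; omega
  have hz' : z ^ i * z ^ (n + 1 - i) = z * z ^ n := by rw [mul_comm]; exact hz
  constructor <;>
    · refine Matrix.ext fun a b => ?_
      fin_cases a <;> fin_cases b <;>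
        · simp [A, B, f, Matrix.mul_apply, Fin.sum_univ_two, smul_eq_mul, hz, hz']
          ring
end

section
/- For 1 ≤ i ≤ n-1, the 4×4 matrices A with blocks [[z·I₂, M],[N, (z + ε·x·y^(n-r))·I₂]] where M = [[xy, y^i],[-x·y^(n-i), x]] and N = [[-x, y^i],[-x·y^(n-i), -xy]], and B the corresponding matrix with the z-blocks swapped and off-diagonal blocks negated, satisfy A·B = f·I₄ = B·A for f = z² + x²y + xy^n + ε·x·y^(n-r)·z, in characteristic 2 with ε = 1. -/
open MvPolynomial Matrix

set_option maxHeartbeats 1000000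

/-- M_{2i} for the D_{2n}^r equation in characteristic 2 with ε = 1, as a 4×4 block
matrix factorization. -/
theorem stmt_3 (k : Type*) [Field k] [CharP k 2] (n r i : ℕ)
    (hn : 2 ≤ n) (hr1 : 1 ≤ r) (hr : r ≤ n - 1) (hi1 : 1 ≤ i) (hi : i ≤ n - 1) :
    let x : MvPolynomial (Fin 3) k := X 0
    let y : MvPolynomial (Fin 3) k := X 1
    let z : MvPolynomial (Fin 3) k := X 2
    let f : MvPolynomial (Fin 3) k := z ^ 2 + x ^ 2 * y + x * y ^ n + x * y ^ (n - r) * z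
    let M : Matrix (Fin 2) (Fin 2) (MvPolynomial (Fin 3) k) :=
      !![x * y, y ^ i; -(x * y ^ (n - i)), x]
    let N : Matrix (Fin 2) (Fin 2) (MvPolynomial (Fin 3) k) :=
      !![-x, y ^ i; -(x * y ^ (n - i)), -(x * y)]
    let A : Matrix (Fin 2 ⊕ Fin 2) (Fin 2 ⊕ Fin 2) (MvPolynomial (Fin 3) k) :=
      Matrix.fromBlocks (z • 1) M N ((z + x * y ^ (n - r)) • 1)
    let B : Matrix (Fin 2 ⊕ Fin 2) (Fin 2 ⊕ Fin 2) (MvPolynomial (Fin 3) k) :=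
      Matrix.fromBlocks ((z + x * y ^ (n - r)) • 1) (-M) (-N) (z • 1)
    A * B = f • (1 : Matrix (Fin 2 ⊕ Fin 2) (Fin 2 ⊕ Fin 2) (MvPolynomial (Fin 3) k)) ∧
      B * A = f • (1 : Matrix (Fin 2 ⊕ Fin 2) (Fin 2 ⊕ Fin 2) (MvPolynomial (Fin 3) k)) := by
  intro x y z f M N A B
  have hin : i ≤ n := le_trans hi (Nat.sub_le n 1)
  have hyn : y ^ (n - i) * y ^ i = y ^ n := by
    rw [← pow_add, Nat.sub_add_cancel hin]
  have hone : (1 : Matrix (Fin 2 ⊕ Fin 2) (Fin 2 ⊕ Fin 2) (MvPolynomial (Fin 3) k)) =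
      Matrix.fromBlocks 1 0 0 1 := Matrix.fromBlocks_one.symm
  constructor <;>
  · show Matrix.fromBlocks _ _ _ _ * Matrix.fromBlocks _ _ _ _ = _
    rw [Matrix.fromBlocks_multiply, hone, Matrix.fromBlocks_smul]
    rw [Matrix.fromBlocks_inj]
    refine ⟨?_, ?_, ?_, ?_⟩ <;>
    · ext a b
      fin_cases a <;> fin_cases b <;>
      · simp [M, N, f, Matrix.mul_apply, Fin.sum_univ_succ, Matrix.one_apply]
        try rw [← hyn]
        try ring
        try (simp only [MvPolynomial.coeff_add]; ring)
end

section
/- For the D_{2n+1}^0 equation f = z² + x²y + y^n·z, the pair A = [[z, x²],[-y, z + y^n]] and B = [[z + y^n, -x²],[y, z]] satisfies A·B = f·I₂ and B·A = f·I₂ over k[x,y,z] when k has characteristic 2. -/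
open MvPolynomial Matrix

/-- M₁ for the D_{2n+1}^0 equation f = z² + x²y + yⁿz in characteristic 2. -/
theorem stmt_4 (k : Type*) [Field k] [CharP k 2] (n : ℕ) (hn : 2 ≤ n) :
    let x : MvPolynomial (Fin 3) k := X 0
    let y : MvPolynomial (Fin 3) k := X 1
    let z : MvPolynomial (Fin 3) k := X 2
    let f : MvPolynomial (Fin 3) k := z ^ 2 + x ^ 2 * y + y ^ n * z
    let A : Matrix (Fin 2) (Fin 2) (MvPolynomial (Fin 3) k) :=
      !![z, x ^ 2; -y, z + y ^ n]
    let B : Matrix (Fin 2) (Fin 2) (MvPolynomial (Fin 3) k) :=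
      !![z + y ^ n, -(x ^ 2); y, z]
    A * B = f • (1 : Matrix (Fin 2) (Fin 2) (MvPolynomial (Fin 3) k)) ∧
      B * A = f • (1 : Matrix (Fin 2) (Fin 2) (MvPolynomial (Fin 3) k)) := by
  intro x y z f A B
  constructor <;>
  · apply Matrix.ext
    intro i j
    fin_cases i <;> fin_cases j <;>
      simp [A, B, f, Matrix.mul_apply, Fin.sum_univ_two] <;> ring
end

section
/- For the E_6^0 equation f = z² + x³ + y²z over a field of characteristic 2, the pair A = [[z, x²],[-x, z + y²]] and B = [[z + y², -x²],[x, z]] satisfies A·B = f·I₂ and B·A = f·I₂. -/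
open MvPolynomial Matrix

/-- M₁ for the E₆⁰ equation f = z² + x³ + y²z in characteristic 2. -/
theorem stmt_6 (k : Type*) [Field k] [CharP k 2] :
    let x : MvPolynomial (Fin 3) k := X 0
    let y : MvPolynomial (Fin 3) k := X 1
    let z : MvPolynomial (Fin 3) k := X 2
    let f : MvPolynomial (Fin 3) k := z ^ 2 + x ^ 3 + y ^ 2 * z
    let A : Matrix (Fin 2) (Fin 2) (MvPolynomial (Fin 3) k) :=
      !![z, x ^ 2; -x, z + y ^ 2]
    let B : Matrix (Fin 2) (Fin 2) (MvPolynomial (Fin 3) k) :=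
      !![z + y ^ 2, -(x ^ 2); x, z]
    A * B = f • (1 : Matrix (Fin 2) (Fin 2) (MvPolynomial (Fin 3) k)) ∧
      B * A = f • (1 : Matrix (Fin 2) (Fin 2) (MvPolynomial (Fin 3) k)) := by
  intro x y z f A B
  constructor <;>
  · ext i j : 1
    fin_cases i <;> fin_cases j <;>
      simp [A, B, f, Matrix.mul_apply, Fin.sum_univ_succ, Matrix.one_apply] <;> ring
end

section
/- For the E_6^1 equation f = z² + x³ + y²z + xyz over a field of characteristic 2, the 4×4 pair A = [[z,0,x²,y],[0,z,0,-x],[-x,-y,z+y²+xy,0],[0,x²,0,z+y²+xy]] and B = [[z+y²+xy,0,-x²,-y],[0,z+y²+xy,0,x],[x,y,z,0],[0,-x²,0,z]] satisfies A·B = f·I₄ and B·A = f·I₄. -/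
open MvPolynomial Matrix

/-- M₆ for the E₆¹ equation f = z² + x³ + y²z + xyz in characteristic 2. -/
theorem stmt_7 (k : Type*) [Field k] [CharP k 2] :
    let x : MvPolynomial (Fin 3) k := X 0
    let y : MvPolynomial (Fin 3) k := X 1
    let z : MvPolynomial (Fin 3) k := X 2
    let f : MvPolynomial (Fin 3) k := z ^ 2 + x ^ 3 + y ^ 2 * z + x * y * z
    let A : Matrix (Fin 4) (Fin 4) (MvPolynomial (Fin 3) k) :=
      !![z, 0, x ^ 2, y; 0, z, 0, -x; -x, -y, z + y ^ 2 + x * y, 0; 0, x ^ 2, 0, z + y ^ 2 + x * y]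
    let B : Matrix (Fin 4) (Fin 4) (MvPolynomial (Fin 3) k) :=
      !![z + y ^ 2 + x * y, 0, -(x ^ 2), -y; 0, z + y ^ 2 + x * y, 0, x; x, y, z, 0; 0, -(x ^ 2), 0, z]
    A * B = f • (1 : Matrix (Fin 4) (Fin 4) (MvPolynomial (Fin 3) k)) ∧
      B * A = f • (1 : Matrix (Fin 4) (Fin 4) (MvPolynomial (Fin 3) k)) := by
  intro x y z f A B
  have h2 : (2 : MvPolynomial (Fin 3) k) = 0 := by
    exact_mod_cast CharP.cast_eq_zero (MvPolynomial (Fin 3) k) 2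
  constructor <;>
  · rw [← Matrix.ext_iff]; intro i j
    fin_cases i <;> fin_cases j <;>
      simp [A, B, f, Matrix.mul_apply, Fin.sum_univ_four, Matrix.one_apply] <;>
      (try ring_nf) <;> simp [h2] <;> ring
end

section
/- For the E_7^0 equation f = z² + x³ + xy³, the 4×4 pair A = [[z,0,x²,xy²],[0,z,y,-x],[-x,-xy²,z,0],[-y,x²,0,z]] and B = [[z,0,-x²,-xy²],[0,z,-y,x],[x,xy²,z,0],[y,-x²,0,z]] satisfies A·B = f·I₄ and B·A = f·I₄ over k[x,y,z]. -/
open MvPolynomial Matrix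

set_option maxHeartbeats 2000000 in

/-- M₁ for the E₇⁰ equation f = z² + x³ + xy³. -/
theorem stmt_9 (k : Type*) [Field k] :
    let x : MvPolynomial (Fin 3) k := X 0
    let y : MvPolynomial (Fin 3) k := X 1
    let z : MvPolynomial (Fin 3) k := X 2
    let f : MvPolynomial (Fin 3) k := z ^ 2 + x ^ 3 + x * y ^ 3
    let A : Matrix (Fin 4) (Fin 4) (MvPolynomial (Fin 3) k) :=
      !![z, 0, x ^ 2, x * y ^ 2; 0, z, y, -x; -x, -(x * y ^ 2), z, 0; -y, x ^ 2, 0, z]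
    let B : Matrix (Fin 4) (Fin 4) (MvPolynomial (Fin 3) k) :=
      !![z, 0, -(x ^ 2), -(x * y ^ 2); 0, z, -y, x; x, x * y ^ 2, z, 0; y, -(x ^ 2), 0, z]
    A * B = f • (1 : Matrix (Fin 4) (Fin 4) (MvPolynomial (Fin 3) k)) ∧
      B * A = f • (1 : Matrix (Fin 4) (Fin 4) (MvPolynomial (Fin 3) k)) := by
  intro x y z f A B
  constructor <;>
  · ext i j
    fin_cases i <;> fin_cases j <;>
      simp [A, B, f, Matrix.mul_apply, Fin.sum_univ_succ, Matrix.one_apply] <;> ring_nf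
end

section
/- For the E_7^0 equation f = z² + x³ + xy³, the 6×6 pair A with top-left block z·I₃, top-right block M = [[-xy, x², xy²],[y², -xy, x²],[x, y², -xy]], bottom-left block N = [[0, -xy, -x²],[-x, 0, -xy],[-y, -x, 0]], bottom-right block z·I₃, and B with the off-diagonal blocks negated, satisfies A·B = f·I₆ and B·A = f·I₆. -/
open MvPolynomial Matrix

/-- M₄ for the E₇⁰ equation f = z² + x³ + xy³, as a 6×6 block matrix factorization. -/
theorem stmt_10 (k : Type*) [Field k] :
    let x : MvPolynomial (Fin 3) k := X 0
    let y : MvPolynomial (Fin 3) k := X 1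
    let z : MvPolynomial (Fin 3) k := X 2
    let f : MvPolynomial (Fin 3) k := z ^ 2 + x ^ 3 + x * y ^ 3
    let M : Matrix (Fin 3) (Fin 3) (MvPolynomial (Fin 3) k) :=
      !![-(x * y), x ^ 2, x * y ^ 2; y ^ 2, -(x * y), x ^ 2; x, y ^ 2, -(x * y)]
    let N : Matrix (Fin 3) (Fin 3) (MvPolynomial (Fin 3) k) :=
      !![0, -(x * y), -(x ^ 2); -x, 0, -(x * y); -y, -x, 0]
    let A : Matrix (Fin 3 ⊕ Fin 3) (Fin 3 ⊕ Fin 3) (MvPolynomial (Fin 3) k) :=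
      Matrix.fromBlocks (z • 1) M N (z • 1)
    let B : Matrix (Fin 3 ⊕ Fin 3) (Fin 3 ⊕ Fin 3) (MvPolynomial (Fin 3) k) :=
      Matrix.fromBlocks (z • 1) (-M) (-N) (z • 1)
    A * B = f • (1 : Matrix (Fin 3 ⊕ Fin 3) (Fin 3 ⊕ Fin 3) (MvPolynomial (Fin 3) k)) ∧
      B * A = f • (1 : Matrix (Fin 3 ⊕ Fin 3) (Fin 3 ⊕ Fin 3) (MvPolynomial (Fin 3) k)) := by
  intro x y z f M N A B
  have hMN : M * N = (-(x ^ 3 + x * y ^ 3)) • 1 := by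
    ext i j
    fin_cases i <;> fin_cases j <;>
      simp [M, N, Matrix.mul_apply, Fin.sum_univ_succ, Matrix.one_apply] <;> ring
  have hNM : N * M = (-(x ^ 3 + x * y ^ 3)) • 1 := by
    ext i j
    fin_cases i <;> fin_cases j <;>
      simp [M, N, Matrix.mul_apply, Fin.sum_univ_succ, Matrix.one_apply] <;> ring
  have hone : (1 : Matrix (Fin 3 ⊕ Fin 3) (Fin 3 ⊕ Fin 3) (MvPolynomial (Fin 3) k)) =
      Matrix.fromBlocks 1 0 0 1 := (Matrix.fromBlocks_one).symm
  have key : ∀ P Q : Matrix (Fin 3) (Fin 3) (MvPolynomial (Fin 3) k),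
      P * Q = (-(x ^ 3 + x * y ^ 3)) • 1 → Q * P = (-(x ^ 3 + x * y ^ 3)) • 1 →
      Matrix.fromBlocks (z • 1) P Q (z • 1) * Matrix.fromBlocks (z • 1) (-P) (-Q) (z • 1) =
        f • (1 : Matrix (Fin 3 ⊕ Fin 3) (Fin 3 ⊕ Fin 3) (MvPolynomial (Fin 3) k)) := by
    intro P Q hPQ hQP
    rw [Matrix.fromBlocks_multiply, hone, Matrix.fromBlocks_smul]
    simp only [hPQ, hQP, Matrix.mul_neg, Matrix.neg_mul, smul_mul_assoc, Matrix.mul_smul,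
      Matrix.mul_one, Matrix.one_mul, smul_neg, neg_neg, neg_smul, smul_smul, smul_zero, f]
    rw [show (z * z) • (1 : Matrix (Fin 3) (Fin 3) (MvPolynomial (Fin 3) k)) +
        (x ^ 3 + x * y ^ 3) • 1 = (z ^ 2 + x ^ 3 + x * y ^ 3) • 1 by module,
      show (x ^ 3 + x * y ^ 3) • (1 : Matrix (Fin 3) (Fin 3) (MvPolynomial (Fin 3) k)) +
        (z * z) • 1 = (z ^ 2 + x ^ 3 + x * y ^ 3) • 1 by module,
      neg_add_cancel, add_neg_cancel]
  constructor
  · exact key M N hMN hNM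
  · have h1 : (-M) * (-N) = (-(x ^ 3 + x * y ^ 3)) • 1 := by
      rw [Matrix.neg_mul, Matrix.mul_neg, neg_neg, hMN]
    have h2 : (-N) * (-M) = (-(x ^ 3 + x * y ^ 3)) • 1 := by
      rw [Matrix.neg_mul, Matrix.mul_neg, neg_neg, hNM]
    have := key (-M) (-N) h1 h2
    simpa using this
end

section
/- For the E_7^3 equation f = z² + x³ + xy³ + xyz over a field of characteristic 2, the pair A = [[z, x² + y³],[x, z + xy]] and B = [[z + xy, x² + y³],[x, z]] satisfies A·B = f·I₂ and B·A = f·I₂. -/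
open MvPolynomial Matrix

/-- M₆ for the E₇³ equation f = z² + x³ + xy³ + xyz in characteristic 2. -/
theorem stmt_12 (k : Type*) [Field k] [CharP k 2] :
    let x : MvPolynomial (Fin 3) k := X 0
    let y : MvPolynomial (Fin 3) k := X 1
    let z : MvPolynomial (Fin 3) k := X 2
    let f : MvPolynomial (Fin 3) k := z ^ 2 + x ^ 3 + x * y ^ 3 + x * y * z
    let A : Matrix (Fin 2) (Fin 2) (MvPolynomial (Fin 3) k) :=
      !![z, x ^ 2 + y ^ 3; x, z + x * y]
    let B : Matrix (Fin 2) (Fin 2) (MvPolynomial (Fin 3) k) :=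
      !![z + x * y, x ^ 2 + y ^ 3; x, z]
    A * B = f • (1 : Matrix (Fin 2) (Fin 2) (MvPolynomial (Fin 3) k)) ∧
      B * A = f • (1 : Matrix (Fin 2) (Fin 2) (MvPolynomial (Fin 3) k)) := by
  intro x y z f A B
  have h2 : (2 : MvPolynomial (Fin 3) k) = 0 := by
    have := CharP.cast_eq_zero (MvPolynomial (Fin 3) k) 2
    simpa using this
  constructor <;>
  · refine Matrix.ext fun i j => ?_
    fin_cases i <;> fin_cases j <;>
      simp [A, B, f, Matrix.mul_apply, Fin.sum_univ_succ, Matrix.one_apply] <;>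
      ring_nf <;> simp [h2]
end

section
/- For the E_7^r equation in characteristic 2, f = z² + x³ + xy³ + zg where g ∈ {0, x²y, y³, xy}, the 4×4 pair A = [[z,0,x²,xy²],[0,z,xy,x²],[x,y²,z+g,0],[y,x,0,z+g]] and B = [[z+g,0,x²,xy²],[0,z+g,xy,x²],[x,y²,z,0],[y,x,0,z]] satisfies A·B = f·I₄ and B·A = f·I₄. -/
open MvPolynomial Matrix

set_option maxHeartbeats 1000000 in
/-- M₇ for the E₇ʳ equations f = z² + x³ + xy³ + zg in characteristic 2 (g any polynomial, in particular g ∈ {0, x²y, y³, xy}). -/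
theorem stmt_13 (k : Type*) [Field k] [CharP k 2] (g : MvPolynomial (Fin 3) k) :
    let x : MvPolynomial (Fin 3) k := X 0
    let y : MvPolynomial (Fin 3) k := X 1
    let z : MvPolynomial (Fin 3) k := X 2
    let f : MvPolynomial (Fin 3) k := z ^ 2 + x ^ 3 + x * y ^ 3 + z * g
    let A : Matrix (Fin 4) (Fin 4) (MvPolynomial (Fin 3) k) :=
      !![z, 0, x ^ 2, x * y ^ 2; 0, z, x * y, x ^ 2; x, y ^ 2, z + g, 0; y, x, 0, z + g]
    let B : Matrix (Fin 4) (Fin 4) (MvPolynomial (Fin 3) k) :=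
      !![z + g, 0, x ^ 2, x * y ^ 2; 0, z + g, x * y, x ^ 2; x, y ^ 2, z, 0; y, x, 0, z]
    A * B = f • (1 : Matrix (Fin 4) (Fin 4) (MvPolynomial (Fin 3) k)) ∧
      B * A = f • (1 : Matrix (Fin 4) (Fin 4) (MvPolynomial (Fin 3) k)) := by
  intro x y z f A B
  have h2 : (2 : MvPolynomial (Fin 3) k) = 0 := by
    have := CharP.cast_eq_zero (MvPolynomial (Fin 3) k) 2
    exact_mod_cast this
  constructor <;>
  · apply Matrix.ext; intro i j
    fin_cases i <;> fin_cases j <;>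
      simp only [A, B, f, Matrix.mul_apply, Fin.sum_univ_four, Matrix.smul_apply,
        Matrix.one_apply, smul_eq_mul, Matrix.cons_val', Matrix.cons_val_zero,
        Matrix.cons_val_one, Matrix.head_cons, Matrix.head_fin_const, Matrix.empty_val',
        Matrix.cons_val_fin_one, Matrix.cons_val_two, Matrix.cons_val_three,
        Matrix.tail_cons, Fin.isValue, if_true, if_false, mul_one, mul_zero,
        Matrix.cons_val_zero, Matrix.of_apply] <;>
      norm_num [Fin.ext_iff] <;>
      ring_nf <;>
      first
        | rfl
        | (simp only [h2, mul_zero, zero_mul]; try ring_nf)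
end

section
/- For the E_8^0 equation f = z² + x³ + y⁵, the 4×4 pair A = [[z,0,-y³,-x²],[0,z,x,-y²],[y²,-x²,z,0],[x,y³,0,z]] and B = [[z,0,y³,x²],[0,z,-x,y²],[-y²,x²,z,0],[-x,-y³,0,z]] satisfies A·B = f·I₄ and B·A = f·I₄ over k[x,y,z]. -/
open MvPolynomial Matrix

set_option maxHeartbeats 1000000 in
/-- M₁ for the E₈⁰ equation f = z² + x³ + y⁵. -/
theorem stmt_14 (k : Type*) [Field k] :
    let x : MvPolynomial (Fin 3) k := X 0
    let y : MvPolynomial (Fin 3) k := X 1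
    let z : MvPolynomial (Fin 3) k := X 2
    let f : MvPolynomial (Fin 3) k := z ^ 2 + x ^ 3 + y ^ 5
    let A : Matrix (Fin 4) (Fin 4) (MvPolynomial (Fin 3) k) :=
      !![z, 0, -(y ^ 3), -(x ^ 2); 0, z, x, -(y ^ 2); y ^ 2, -(x ^ 2), z, 0; x, y ^ 3, 0, z]
    let B : Matrix (Fin 4) (Fin 4) (MvPolynomial (Fin 3) k) :=
      !![z, 0, y ^ 3, x ^ 2; 0, z, -x, y ^ 2; -(y ^ 2), x ^ 2, z, 0; -x, -(y ^ 3), 0, z]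
    A * B = f • (1 : Matrix (Fin 4) (Fin 4) (MvPolynomial (Fin 3) k)) ∧
      B * A = f • (1 : Matrix (Fin 4) (Fin 4) (MvPolynomial (Fin 3) k)) := by
  intro x y z f A B
  constructor <;>
  · ext i j
    fin_cases i <;> fin_cases j <;>
      simp [A, B, f, Matrix.mul_apply, Fin.sum_univ_four, Matrix.one_apply] <;> ring
end

section
/- For the E_8^0 equation f = z² + x³ + y⁵, the 6×6 pair A with top-left block z·I₃, top-right block M = [[-x², -y⁴, xy³],[xy, -x², -y⁴],[-y², xy, -x²]], bottom-left block N = [[x, 0, y³],[y, x, 0],[0, y, x]], bottom-right block z·I₃, and B = [[z·I₃, -M],[-N, z·I₃]], satisfies A·B = f·I₆ and B·A = f·I₆. -/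
open MvPolynomial Matrix

theorem aux_MN (k : Type*) [Field k] :
    let x : MvPolynomial (Fin 3) k := X 0
    let y : MvPolynomial (Fin 3) k := X 1
    let M : Matrix (Fin 3) (Fin 3) (MvPolynomial (Fin 3) k) :=
      !![-(x ^ 2), -(y ^ 4), x * y ^ 3; x * y, -(x ^ 2), -(y ^ 4); -(y ^ 2), x * y, -(x ^ 2)]
    let N : Matrix (Fin 3) (Fin 3) (MvPolynomial (Fin 3) k) :=
      !![x, 0, y ^ 3; y, x, 0; 0, y, x]
    M * N = (-(x^3 + y^5)) • 1 ∧ N * M = (-(x^3 + y^5)) • 1 := by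
  intro x y M N
  constructor <;>
  · ext i j
    fin_cases i <;> fin_cases j <;>
      simp [M, N, Matrix.mul_apply, Fin.sum_univ_three, Matrix.one_apply] <;> ring

/-- M₈ for the E₈⁰ equation f = z² + x³ + y⁵, as a 6×6 block matrix factorization. -/
theorem stmt_15 (k : Type*) [Field k] :
    let x : MvPolynomial (Fin 3) k := X 0
    let y : MvPolynomial (Fin 3) k := X 1
    let z : MvPolynomial (Fin 3) k := X 2
    let f : MvPolynomial (Fin 3) k := z ^ 2 + x ^ 3 + y ^ 5
    let M : Matrix (Fin 3) (Fin 3) (MvPolynomial (Fin 3) k) :=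
      !![-(x ^ 2), -(y ^ 4), x * y ^ 3; x * y, -(x ^ 2), -(y ^ 4); -(y ^ 2), x * y, -(x ^ 2)]
    let N : Matrix (Fin 3) (Fin 3) (MvPolynomial (Fin 3) k) :=
      !![x, 0, y ^ 3; y, x, 0; 0, y, x]
    let A : Matrix (Fin 3 ⊕ Fin 3) (Fin 3 ⊕ Fin 3) (MvPolynomial (Fin 3) k) :=
      Matrix.fromBlocks (z • 1) M N (z • 1)
    let B : Matrix (Fin 3 ⊕ Fin 3) (Fin 3 ⊕ Fin 3) (MvPolynomial (Fin 3) k) :=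
      Matrix.fromBlocks (z • 1) (-M) (-N) (z • 1)
    A * B = f • (1 : Matrix (Fin 3 ⊕ Fin 3) (Fin 3 ⊕ Fin 3) (MvPolynomial (Fin 3) k)) ∧
      B * A = f • (1 : Matrix (Fin 3 ⊕ Fin 3) (Fin 3 ⊕ Fin 3) (MvPolynomial (Fin 3) k)) := by
  intro x y z f M N A B
  obtain ⟨hMN, hNM⟩ : M * N = (-((X 0 : MvPolynomial (Fin 3) k) ^ 3 + X 1 ^ 5)) • 1 ∧
      N * M = (-((X 0 : MvPolynomial (Fin 3) k) ^ 3 + X 1 ^ 5)) • 1 := aux_MN k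
  have h1 : (f • (1 : Matrix (Fin 3 ⊕ Fin 3) (Fin 3 ⊕ Fin 3) (MvPolynomial (Fin 3) k)))
      = Matrix.fromBlocks (f • 1) 0 0 (f • 1) := by
    rw [← Matrix.fromBlocks_one, Matrix.fromBlocks_smul]
    simp
  constructor <;>
  · show Matrix.fromBlocks _ _ _ _ * Matrix.fromBlocks _ _ _ _ = _
    rw [Matrix.fromBlocks_multiply, h1]
    all_goals
      simp only [Matrix.mul_neg, Matrix.neg_mul, hMN, hNM, Matrix.smul_mul, Matrix.mul_smul,
        Matrix.one_mul, Matrix.mul_one, smul_smul, neg_neg, smul_neg, neg_smul]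
    all_goals
      have hz : (z * z) • (1 : Matrix (Fin 3) (Fin 3) (MvPolynomial (Fin 3) k))
          + ((X 0 : MvPolynomial (Fin 3) k) ^ 3 + X 1 ^ 5) • 1 = f • 1 := by
        rw [← add_smul]; congr 1; ring
      have hz' : ((X 0 : MvPolynomial (Fin 3) k) ^ 3 + X 1 ^ 5)
          • (1 : Matrix (Fin 3) (Fin 3) (MvPolynomial (Fin 3) k)) + (z * z) • 1 = f • 1 := by
        rw [← add_smul]; congr 1; ring
      simp only [add_neg_cancel, neg_add_cancel, hz, hz']
end

section
/- For the E_8^1 equation f = z² + x³ + y⁵ + xy⁴ over a field of characteristic 5, the 4×4 pair A = [[z,0,-x²,-xy³-y⁴],[0,z,-y,x],[x,xy³+y⁴,z,0],[y,-x²,0,z]] and B = [[z,0,x²,xy³+y⁴],[0,z,y,-x],[-x,-xy³-y⁴,z,0],[-y,x²,0,z]] satisfies A·B = f·I₄ and B·A = f·I₄. -/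
open MvPolynomial Matrix

set_option maxHeartbeats 1000000

/-- M₇ for the E₈¹ equation f = z² + x³ + y⁵ + xy⁴ in characteristic 5. -/
theorem stmt_16 (k : Type*) [Field k] [CharP k 5] :
    let x : MvPolynomial (Fin 3) k := X 0
    let y : MvPolynomial (Fin 3) k := X 1
    let z : MvPolynomial (Fin 3) k := X 2
    let f : MvPolynomial (Fin 3) k := z ^ 2 + x ^ 3 + y ^ 5 + x * y ^ 4
    let A : Matrix (Fin 4) (Fin 4) (MvPolynomial (Fin 3) k) :=
      !![z, 0, -(x ^ 2), -(x * y ^ 3) - y ^ 4; 0, z, -y, x; x, x * y ^ 3 + y ^ 4, z, 0; y, -(x ^ 2), 0, z]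
    let B : Matrix (Fin 4) (Fin 4) (MvPolynomial (Fin 3) k) :=
      !![z, 0, x ^ 2, x * y ^ 3 + y ^ 4; 0, z, y, -x; -x, -(x * y ^ 3) - y ^ 4, z, 0; -y, x ^ 2, 0, z]
    A * B = f • (1 : Matrix (Fin 4) (Fin 4) (MvPolynomial (Fin 3) k)) ∧
      B * A = f • (1 : Matrix (Fin 4) (Fin 4) (MvPolynomial (Fin 3) k)) := by
  intro x y z f A B
  constructor <;>
  · rw [← Matrix.ext_iff]
    intro i j
    fin_cases i <;> fin_cases j <;>
      simp only [A, B, f, Matrix.mul_apply, Fin.sum_univ_four, Matrix.smul_apply,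
        Matrix.one_apply, smul_eq_mul, Matrix.cons_val', Matrix.cons_val_zero,
        Matrix.cons_val_one, Matrix.head_cons, Matrix.empty_val', Matrix.cons_val_fin_one,
        Matrix.head_fin_const, Matrix.of_apply, Matrix.tail_cons, Fin.isValue,
        if_true, if_false, Matrix.cons_val_two, Matrix.cons_val_three, mul_one, mul_zero,
        Fin.reduceEq, reduceIte, Fin.reduceFinMk] <;> ring
end

section
/- For the E_8^1 equation f = z² + x³ + y⁵ + x²y³ over a field of characteristic 3, the 4×4 pair A = [[z,0,-x²-xy³,y²],[0,z,-y³,-x],[x,y²,z,0],[-y³,x²+xy³,0,z]] and B = [[z,0,x²+xy³,-y²],[0,z,y³,x],[-x,-y²,z,0],[y³,-x²-xy³,0,z]] satisfies A·B = f·I₄ and B·A = f·I₄. -/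
open MvPolynomial Matrix

/-- M₁ for the E₈¹ equation f = z² + x³ + y⁵ + x²y³ in characteristic 3. -/
theorem stmt_17 (k : Type*) [Field k] [CharP k 3] :
    let x : MvPolynomial (Fin 3) k := X 0
    let y : MvPolynomial (Fin 3) k := X 1
    let z : MvPolynomial (Fin 3) k := X 2
    let f : MvPolynomial (Fin 3) k := z ^ 2 + x ^ 3 + y ^ 5 + x ^ 2 * y ^ 3
    let A : Matrix (Fin 4) (Fin 4) (MvPolynomial (Fin 3) k) :=
      !![z, 0, -(x ^ 2) - x * y ^ 3, y ^ 2; 0, z, -(y ^ 3), -x; x, y ^ 2, z, 0; -(y ^ 3), x ^ 2 + x * y ^ 3, 0, z]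
    let B : Matrix (Fin 4) (Fin 4) (MvPolynomial (Fin 3) k) :=
      !![z, 0, x ^ 2 + x * y ^ 3, -(y ^ 2); 0, z, y ^ 3, x; -x, -(y ^ 2), z, 0; y ^ 3, -(x ^ 2) - x * y ^ 3, 0, z]
    A * B = f • (1 : Matrix (Fin 4) (Fin 4) (MvPolynomial (Fin 3) k)) ∧
      B * A = f • (1 : Matrix (Fin 4) (Fin 4) (MvPolynomial (Fin 3) k)) := by
  intro x y z f A B
  constructor <;>
  · ext i j : 1
    fin_cases i <;> fin_cases j <;>
      · simp [A, B, f, Matrix.mul_apply, Fin.sum_univ_four, Matrix.one_apply]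
        ring
end

section
/- For the E_8^2 equation f = z² + x³ + y⁵ + x²y² over a field of characteristic 3, the 4×4 pair A = [[z,0,-x²,y],[0,z,-x²y-y⁴,-x],[x,y,z,0],[-x²y-y⁴,x²,0,z]] and B = [[z,0,x²,-y],[0,z,x²y+y⁴,x],[-x,-y,z,0],[x²y+y⁴,-x²,0,z]] satisfies A·B = f·I₄ and B·A = f·I₄. -/
open MvPolynomial Matrix

lemma smul_one_fin_four {R : Type*} [CommRing R] (d : R) :
    d • (1 : Matrix (Fin 4) (Fin 4) R) =
      !![d, 0, 0, 0; 0, d, 0, 0; 0, 0, d, 0; 0, 0, 0, d] := by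
  refine Matrix.ext fun i j => ?_
  fin_cases i <;> fin_cases j <;> simp [Matrix.one_apply, Matrix.vecHead, Matrix.vecTail]

set_option maxHeartbeats 1000000 in
/-- M₇ for the E₈² equation f = z² + x³ + y⁵ + x²y² in characteristic 3. -/
theorem stmt_18 (k : Type*) [Field k] [CharP k 3] :
    let x : MvPolynomial (Fin 3) k := X 0
    let y : MvPolynomial (Fin 3) k := X 1
    let z : MvPolynomial (Fin 3) k := X 2
    let f : MvPolynomial (Fin 3) k := z ^ 2 + x ^ 3 + y ^ 5 + x ^ 2 * y ^ 2
    let A : Matrix (Fin 4) (Fin 4) (MvPolynomial (Fin 3) k) :=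
      !![z, 0, -(x ^ 2), y; 0, z, -(x ^ 2 * y) - y ^ 4, -x; x, y, z, 0; -(x ^ 2 * y) - y ^ 4, x ^ 2, 0, z]
    let B : Matrix (Fin 4) (Fin 4) (MvPolynomial (Fin 3) k) :=
      !![z, 0, x ^ 2, -y; 0, z, x ^ 2 * y + y ^ 4, x; -x, -y, z, 0; x ^ 2 * y + y ^ 4, -(x ^ 2), 0, z]
    A * B = f • (1 : Matrix (Fin 4) (Fin 4) (MvPolynomial (Fin 3) k)) ∧
      B * A = f • (1 : Matrix (Fin 4) (Fin 4) (MvPolynomial (Fin 3) k)) := by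
  intro x y z f A B
  rw [smul_one_fin_four]
  constructor <;>
    · refine Matrix.ext fun i j => ?_
      fin_cases i <;> fin_cases j <;>
        · simp [A, B, f, Matrix.mul_apply, Fin.sum_univ_succ, Matrix.vecHead, Matrix.vecTail]
          try ring
end

section
/- For the E_8^r equations in characteristic 2, f = z² + x³ + y⁵ + zg with g ∈ {0, xy³, xy², y³, xy}, the 4×4 pair A = [[z,0,x²,y⁴],[0,z,y,x],[x,y⁴,z+g,0],[y,x²,0,z+g]] and B = [[z+g,0,x²,y⁴],[0,z+g,y,x],[x,y⁴,z,0],[y,x²,0,z]] satisfies A·B = f·I₄ and B·A = f·I₄. -/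
open MvPolynomial Matrix

set_option maxHeartbeats 2000000 in
/-- M₇ for the E₈ʳ equations f = z² + x³ + y⁵ + zg in characteristic 2 (g any polynomial, in particular g ∈ {0, xy³, xy², y³, xy}). -/
theorem stmt_19 (k : Type*) [Field k] [CharP k 2] (g : MvPolynomial (Fin 3) k) :
    let x : MvPolynomial (Fin 3) k := X 0
    let y : MvPolynomial (Fin 3) k := X 1
    let z : MvPolynomial (Fin 3) k := X 2
    let f : MvPolynomial (Fin 3) k := z ^ 2 + x ^ 3 + y ^ 5 + z * g
    let A : Matrix (Fin 4) (Fin 4) (MvPolynomial (Fin 3) k) :=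
      !![z, 0, x ^ 2, y ^ 4; 0, z, y, x; x, y ^ 4, z + g, 0; y, x ^ 2, 0, z + g]
    let B : Matrix (Fin 4) (Fin 4) (MvPolynomial (Fin 3) k) :=
      !![z + g, 0, x ^ 2, y ^ 4; 0, z + g, y, x; x, y ^ 4, z, 0; y, x ^ 2, 0, z]
    A * B = f • (1 : Matrix (Fin 4) (Fin 4) (MvPolynomial (Fin 3) k)) ∧
      B * A = f • (1 : Matrix (Fin 4) (Fin 4) (MvPolynomial (Fin 3) k)) := by
  intro x y z f A B
  have h2 : (2 : MvPolynomial (Fin 3) k) = 0 := by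
    have := CharP.cast_eq_zero (MvPolynomial (Fin 3) k) 2
    simpa using this
  constructor <;>
  · refine Matrix.ext fun i j => ?_
    fin_cases i <;> fin_cases j <;>
      simp only [A, B, f, Matrix.mul_apply, Fin.sum_univ_succ, Finset.sum_empty,
        Matrix.cons_val', Matrix.cons_val_zero, Matrix.cons_val_one, Matrix.head_cons,
        Matrix.head_fin_const, Matrix.empty_val', Matrix.cons_val_fin_one,
        Matrix.cons_val_succ, Finset.univ_eq_empty, Matrix.smul_apply, Matrix.one_apply,
        Fin.isValue, smul_eq_mul]
    all_goals norm_num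
    all_goals (ring_nf; try simp [h2]; try ring_nf)
    all_goals (simp only [mul_two]; simp only [← two_mul, h2, zero_mul, add_zero])
end
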